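/- arXiv:1106.3838 — 3 statements merged into one kernel-verified Lean document; each statement's English description precedes it below -/
import Mathlib

section
/- Let c be a positive integer and let k₁,…,k_c and r₁,…,r_c be positive integers with k = Σᵢ kᵢ and r = Σᵢ rᵢ. Then for every graph G, σ(G, r, k − c + 1) ≤ Σᵢ σ(G, rᵢ, kᵢ). -/
/-- One simultaneous move in the game: each agent stays put or moves along an edge. -/
def RSMove {V : Type*} (G : SimpleGraph V) {ι : Type*} (p q : ι → V) : Prop :=
  ∀ i, q i = p i ∨ G.Adj (p i) (q i)

/-- The spies have a winning strategy in 𝒢(G,r,s,k): there is a causal function `f`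
(depending only on the history so far) producing the spies' positions at the end of each
round from the revolutionaries' positions up to that round (the revolutionaries
place/move first in each round), such that against every legal play of the
revolutionaries the spies' play is legal and, at the end of every round, each vertex
holding at least `k` revolutionaries is occupied by a spy. -/
def SpiesWin {V : Type*} (G : SimpleGraph V) (r s k : ℕ) : Prop :=
  ∃ f : (ℕ → Fin r → V) → ℕ → Fin s → V,
    (∀ R R' n, (∀ m, m ≤ n → R m = R' m) → f R n = f R' n) ∧
    ∀ R : ℕ → Fin r → V, (∀ n, RSMove G (R n) (R (n + 1))) →
      (∀ n, RSMove G (f R n) (f R (n + 1))) ∧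
      (∀ n v, k ≤ Set.ncard {i | R n i = v} → ∃ j, f R n j = v)

/-- σ(G, r, k): the minimum number of spies needed to win 𝒢(G,r,s,k). -/
noncomputable def spySigma {V : Type*} (G : SimpleGraph V) (r k : ℕ) : ℕ :=
  sInf {s | SpiesWin G r s k}

/-!
Split the `r` revolutionaries into `c` groups of sizes `r i`, and let a team of `σ(G, r i, k i)`
spies play a winning strategy against group `i` only. A meeting of `∑ k i - c + 1`
revolutionaries contains, by pigeonhole, at least `k i` members of some group `i`, and that
group's team guards it.
-/

open Finset

/-- With as many spies as revolutionaries, each spy shadows one revolutionary. -/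
lemma spiesWin_self {V : Type*} (G : SimpleGraph V) (r : ℕ) {k : ℕ} (hk : 0 < k) :
    SpiesWin G r r k := by
  refine ⟨fun R n => R n, fun R R' n h => h n le_rfl, fun R hR => ⟨hR, fun n v hv => ?_⟩⟩
  exact (Set.ncard_pos (Set.toFinite _)).mp (hk.trans_le hv)

lemma spiesWin_spySigma {V : Type*} (G : SimpleGraph V) (r : ℕ) {k : ℕ} (hk : 0 < k) :
    SpiesWin G r (spySigma G r k) k :=
  Nat.sInf_mem (s := {s | SpiesWin G r s k}) ⟨r, spiesWin_self G r hk⟩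

lemma Set.ncard_setOf_eq_sum_ite {α : Type*} [Fintype α] (p : α → Prop) [DecidablePred p] :
    {a | p a}.ncard = ∑ a, if p a then 1 else 0 := by
  rw [Set.ncard_eq_toFinset_card', Set.toFinset_ofPred, Finset.card_filter]

lemma Set.ncard_setOf_eq_sum_sigma {ι α : Type*} [Fintype ι] {β : ι → Type*}
    [∀ i, Fintype (β i)] [Fintype α] (e : (Σ i, β i) ≃ α) (p : α → Prop) :
    {a | p a}.ncard = ∑ i, {z : β i | p (e ⟨i, z⟩)}.ncard := by
  classical
  simp only [Set.ncard_setOf_eq_sum_ite]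
  rw [← Fintype.sum_equiv e _ _ fun _ => rfl, Fintype.sum_sigma]

lemma Fintype.exists_le_of_sum_sub_card_add_one_le {ι : Type*} [Fintype ι] (k n : ι → ℕ)
    (h : ∑ i, k i - Fintype.card ι + 1 ≤ ∑ i, n i) : ∃ i, k i ≤ n i := by
  have hlt : ∑ i, k i < ∑ i, (n i + 1) := by
    rw [sum_add_distrib, sum_const, card_univ, smul_eq_mul, mul_one]
    omega
  obtain ⟨i, -, hi⟩ := exists_lt_of_sum_lt hlt
  exact ⟨i, Nat.lt_succ_iff.mp hi⟩

lemma spiesWin_sum {V : Type*} (G : SimpleGraph V) {c : ℕ} (k r s : Fin c → ℕ)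
    (h : ∀ i, SpiesWin G (r i) (s i) (k i)) :
    SpiesWin G (∑ i, r i) (∑ i, s i) (∑ i, k i - c + 1) := by
  choose f hcausal hwin using h
  let group (R : ℕ → Fin (∑ i, r i) → V) (i : Fin c) : ℕ → Fin (r i) → V :=
    fun n z => R n (finSigmaFinEquiv ⟨i, z⟩)
  let spy (R : ℕ → Fin (∑ i, r i) → V) (n : ℕ) (p : Σ i, Fin (s i)) : V :=
    f p.1 (group R p.1) n p.2
  refine ⟨fun R n => spy R n ∘ finSigmaFinEquiv.symm, ?_, ?_⟩
  · intro R R' n hRR'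
    funext j
    exact congrFun (hcausal _ (group R _) (group R' _) n fun m hm => by
      simp only [group, hRR' m hm]) _
  intro R hR
  have hgroup : ∀ i n, RSMove G (group R i n) (group R i (n + 1)) := fun i n z => hR n _
  refine ⟨fun n j => (hwin _ _ (hgroup _)).1 n _, fun n v hv => ?_⟩
  rw [Set.ncard_setOf_eq_sum_sigma finSigmaFinEquiv] at hv
  obtain ⟨i, hi⟩ := Fintype.exists_le_of_sum_sub_card_add_one_le k _
    (by rwa [Fintype.card_fin])
  obtain ⟨j, hj⟩ := (hwin i (group R i) (hgroup i)).2 n v hi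
  exact ⟨finSigmaFinEquiv ⟨i, j⟩, by
    simpa only [Function.comp_apply, Equiv.symm_apply_apply] using hj⟩

theorem stmt_5_general {V : Type*} (G : SimpleGraph V) (c : ℕ)
    (k r : Fin c → ℕ) (hk : ∀ i, 0 < k i) :
    spySigma G (∑ i, r i) (∑ i, k i - c + 1) ≤ ∑ i, spySigma G (r i) (k i) :=
  Nat.sInf_le (spiesWin_sum G k r _ fun i => spiesWin_spySigma G (r i) (hk i))

theorem stmt_5 {V : Type*} (G : SimpleGraph V) (c : ℕ) (hc : 0 < c)
    (k r : Fin c → ℕ) (hk : ∀ i, 0 < k i) (hr : ∀ i, 0 < r i) :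
    spySigma G (∑ i, r i) (∑ i, k i - c + 1) ≤ ∑ i, spySigma G (r i) (k i) :=
  stmt_5_general G c k r hk
end

section
/- If r and k are positive integers, then σ(ℤ, r, k) = ⌊r/k⌋, where ℤ denotes the graph on vertex set ℤ with an edge between i and i+1 for every integer i. -/
/-- The graph on ℤ with edges {i, i+1}. -/
def intPathGraph : SimpleGraph ℤ where
  Adj a b := |a - b| = 1
  symm := by constructor; intro a b h; rwa [abs_sub_comm] at h
  loopless := by constructor; intro a h; simp at h

/-! Spy `t < ⌊r/k⌋` always stands on the `(t + 1)k`-th smallest revolutionary position. When every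
revolutionary moves by at most one step, so does every order statistic, so this play is legal; and a
meeting of size `k` at `v` holds the revolutionaries of ranks `a + 1, …, a + k`, where `a` counts
those left of `v`, one of which is a multiple of `k`. Conversely, if the revolutionaries park `k` of
their number on each of `0, …, ⌊r/k⌋ - 1` forever, fewer than `⌊r/k⌋` spies cannot guard all these
meetings. -/

open Finset

section OrderStatistic

variable {ι : Type*} [Fintype ι]

def countLE (p : ι → ℤ) (v : ℤ) : ℕ := #{i | p i ≤ v}

/-- The `j`-th smallest value of `p`, counted with multiplicity; ranks start at `1`. -/
noncomputable def orderStat (p : ι → ℤ) (j : ℕ) : ℤ := sInf {v | j ≤ countLE p v}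

lemma countLE_mono (p : ι → ℤ) : Monotone (countLE p) := fun _ _ h =>
  card_le_card (monotone_filter_right _ fun _ _ hi => hi.trans h)

lemma countLE_sub_one_add_ncard (p : ι → ℤ) (v : ℤ) :
    countLE p (v - 1) + {i | p i = v}.ncard = countLE p v := by
  have split := card_filter_add_card_filter_not (s := ({i | p i ≤ v} : Finset ι))
    (fun i => p i ≤ v - 1)
  rw [filter_filter, filter_filter] at split
  rw [countLE, countLE, ← split, Set.ncard_eq_toFinset_card', Set.toFinset_ofPred]
  congr 2 <;> ext i <;> simp only [mem_filter, mem_univ, true_and] <;> omega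

lemma orderStat_le_iff {p : ι → ℤ} {j : ℕ} (hj : 1 ≤ j) (hjι : j ≤ Fintype.card ι) {v : ℤ} :
    orderStat p j ≤ v ↔ j ≤ countLE p v := by
  obtain ⟨M, hM⟩ := (Set.finite_range p).bddAbove
  obtain ⟨m, hm⟩ := (Set.finite_range p).bddBelow
  have hne : {v | j ≤ countLE p v}.Nonempty := ⟨M, by
    rwa [Set.mem_ofPred_eq, countLE, filter_true_of_mem fun i _ => hM (Set.mem_range_self i)]⟩
  have hbdd : BddBelow {v | j ≤ countLE p v} := ⟨m, fun w hw => by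
    obtain ⟨i, hi⟩ := card_pos.1 (lt_of_lt_of_le hj hw)
    exact (hm (Set.mem_range_self i)).trans (mem_filter.1 hi).2⟩
  exact ⟨fun h => (Int.csInf_mem hne hbdd).trans (countLE_mono p h), fun h => csInf_le hbdd h⟩

lemma orderStat_le_add_one {p q : ι → ℤ} {j : ℕ} (hj : 1 ≤ j) (hjι : j ≤ Fintype.card ι)
    (h : ∀ i, q i ≤ p i + 1) : orderStat q j ≤ orderStat p j + 1 := by
  rw [orderStat_le_iff hj hjι]
  refine ((orderStat_le_iff (p := p) hj hjι).1 le_rfl).trans (card_le_card ?_)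
  exact monotone_filter_right _ fun i _ hi => (h i).trans (by omega)

lemma abs_orderStat_sub_le_one {p q : ι → ℤ} {j : ℕ} (hj : 1 ≤ j) (hjι : j ≤ Fintype.card ι)
    (h : ∀ i, |p i - q i| ≤ 1) : |orderStat p j - orderStat q j| ≤ 1 := by
  have hpq := orderStat_le_add_one (p := q) (q := p) hj hjι fun i => by
    linarith [(abs_le.1 (h i)).2]
  have hqp := orderStat_le_add_one (p := p) (q := q) hj hjι fun i => by
    linarith [(abs_le.1 (h i)).1]
  exact abs_le.2 ⟨by linarith, by linarith⟩

lemma orderStat_eq_of_countLE {p : ι → ℤ} {j : ℕ} {v : ℤ} (hj : 1 ≤ j)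
    (hjι : j ≤ Fintype.card ι) (hlt : countLE p (v - 1) < j) (hle : j ≤ countLE p v) :
    orderStat p j = v :=
  le_antisymm ((orderStat_le_iff hj hjι).2 hle) <| Int.sub_one_lt_iff.1 <|
    lt_of_not_ge fun h => hlt.not_ge ((orderStat_le_iff hj hjι).1 h)

lemma exists_orderStat_eq_of_le_ncard {p : ι → ℤ} {k : ℕ} (hk : 0 < k) {v : ℤ}
    (hv : k ≤ {i | p i = v}.ncard) :
    ∃ t < Fintype.card ι / k, orderStat p ((t + 1) * k) = v := by
  set a := countLE p (v - 1)
  have hsplit := countLE_sub_one_add_ncard p v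
  have hlt : a < (a / k + 1) * k := by rw [add_one_mul]; exact Nat.lt_div_mul_add hk
  have hle : (a / k + 1) * k ≤ countLE p v := by
    have := Nat.div_mul_le_self a k
    rw [add_one_mul]; omega
  have hcard : (a / k + 1) * k ≤ Fintype.card ι := hle.trans (card_le_univ _)
  exact ⟨a / k, Nat.lt_of_succ_le ((Nat.le_div_iff_mul_le hk).2 hcard),
    orderStat_eq_of_countLE (Nat.mul_pos (Nat.succ_pos _) hk) hcard hlt hle⟩

end OrderStatistic

lemma rsMove_intPathGraph_iff {ι : Type*} {p q : ι → ℤ} :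
    RSMove intPathGraph p q ↔ ∀ i, |p i - q i| ≤ 1 := by
  refine forall_congr' fun i => ?_
  show q i = p i ∨ |p i - q i| = 1 ↔ _
  rcases abs_cases (p i - q i) with ⟨h, h'⟩ | ⟨h, h'⟩ <;> rw [h] <;> omega

lemma spiesWin_intPathGraph_div {r k : ℕ} (hk : 0 < k) :
    SpiesWin intPathGraph r (r / k) k := by
  have hrank (t : Fin (r / k)) : 1 ≤ (t + 1) * k ∧ (t + 1) * k ≤ Fintype.card (Fin r) :=
    ⟨Nat.mul_pos t.val.succ_pos hk,
      by rw [Fintype.card_fin, ← Nat.le_div_iff_mul_le hk]; exact t.2⟩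
  refine ⟨fun R n t => orderStat (R n) ((t + 1) * k),
    fun R R' n h => by dsimp only; rw [h n le_rfl],
    fun R hR => ⟨fun n => ?_, fun n v hv => ?_⟩⟩
  · exact rsMove_intPathGraph_iff.2 fun t =>
      abs_orderStat_sub_le_one (hrank t).1 (hrank t).2 (rsMove_intPathGraph_iff.1 (hR n))
  · obtain ⟨t, ht, hguard⟩ := exists_orderStat_eq_of_le_ncard hk hv
    exact ⟨⟨t, by simpa using ht⟩, hguard⟩

lemma le_ncard_setOf_div_eq {r k t : ℕ} (ht : t < r / k) :
    k ≤ {i : Fin r | (i : ℕ) / k = t}.ncard := by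
  have hk : 0 < k := Nat.pos_of_ne_zero (by rintro rfl; simp at ht)
  have hr : t * k + k ≤ r := add_one_mul t k ▸ (Nat.le_div_iff_mul_le hk).1 ht
  let e : Fin k → Fin r := fun a => ⟨t * k + a, by omega⟩
  have he : Function.Injective e := fun a b hab => Fin.ext (by simpa [e] using hab)
  calc k = (Set.range e).ncard := by
        rw [Set.ncard_range_of_injective he, Nat.card_eq_fintype_card, Fintype.card_fin]
    _ ≤ _ := Set.ncard_le_ncard (by
      rintro _ ⟨a, rfl⟩
      exact Nat.div_eq_of_lt_le (by simp [e]) (by simp [e, add_one_mul]))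

lemma not_spiesWin_of_lt_div {G : SimpleGraph ℤ} {r s k : ℕ} (h : s < r / k) :
    ¬ SpiesWin G r s k := by
  rintro ⟨f, -, hf⟩
  let R : ℕ → Fin r → ℤ := fun _ i => ((i / k : ℕ) : ℤ)
  have hguard (t : Fin (r / k)) : ∃ j, f R 0 j = (t : ℕ) :=
    (hf R fun _ _ => Or.inl rfl).2 0 _ <| by
      simpa only [R, Nat.cast_inj] using le_ncard_setOf_div_eq t.2
  choose g hg using hguard
  have hg_inj : Function.Injective g := fun t t' htt' =>
    Fin.ext (by exact_mod_cast (hg t).symm.trans ((congrArg _ htt').trans (hg t')))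
  exact h.not_ge (by simpa using Fintype.card_le_of_injective g hg_inj)

theorem stmt_12_general (r k : ℕ) (hk : 0 < k) :
    spySigma intPathGraph r k = r / k :=
  le_antisymm (Nat.sInf_le (spiesWin_intPathGraph_div hk)) <|
    le_csInf ⟨_, spiesWin_intPathGraph_div hk⟩ fun _ hs =>
      not_lt.1 fun h => not_spiesWin_of_lt_div h hs

theorem stmt_12 (r k : ℕ) (hr : 0 < r) (hk : 0 < k) :
    spySigma intPathGraph r k = r / k :=
  stmt_12_general r k hk
end

section
/- If d, r and k are positive integers with 1 ≤ k ≤ r/2, then σ(ℤ^⊠d, r, k) ≤ r − 2k + 2, where ℤ^⊠d is the d-fold strong product of the graph ℤ with itself. -/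
/-- The d-fold strong product ℤ^⊠d: vertices are ℤ^d, and distinct vertices are adjacent
iff they differ by at most 1 in every coordinate. -/
def intGridGraph (d : ℕ) : SimpleGraph (Fin d → ℤ) where
  Adj a b := a ≠ b ∧ ∀ i, |a i - b i| ≤ 1
  symm := by
    constructor
    intro a b h
    exact ⟨h.1.symm, fun i => by rw [abs_sub_comm]; exact h.2 i⟩
  loopless := by constructor; intro a h; exact h.1 rfl

/-!
The first `r - 2k + 1` spies shadow the first `r - 2k + 1` revolutionaries, and the last spy
stands at the coordinatewise `k`-th smallest position of the remaining `2k - 1` revolutionaries.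
An order statistic of a family moves by at most one when every member does, so in the sup-metric
of `ℤ^⊠d` the last spy always has a legal move. A meeting of `k` revolutionaries either contains
a shadowed one, or consists of `k` of the remaining `2k - 1`; these then form a majority with a
common value in every coordinate, so that value is the `k`-th smallest and the last spy is there.
-/

open Finset

section KthSmallest

variable {ι : Type*} (s : Finset ι) (k : ℕ)

/-- Counted with multiplicity; a junk value unless `0 < k ≤ #s`. -/
noncomputable def kthSmallest (g : ι → ℤ) : ℤ :=
  sInf {z | k ≤ #{i ∈ s | g i ≤ z}}

variable {s k} {g g' : ι → ℤ}

lemma bddBelow_kthSmallest_set (hk : 0 < k) : BddBelow {z | k ≤ #{i ∈ s | g i ≤ z}} := by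
  obtain ⟨b, hb⟩ := (s.image g).bddBelow
  refine ⟨b, fun z hz => ?_⟩
  obtain ⟨i, hi⟩ := card_pos.1 (hk.trans_le hz)
  rw [mem_filter] at hi
  exact (hb (mem_image_of_mem g hi.1)).trans hi.2

lemma nonempty_kthSmallest_set (hks : k ≤ #s) : {z | k ≤ #{i ∈ s | g i ≤ z}}.Nonempty := by
  obtain ⟨b, hb⟩ := (s.image g).bddAbove
  refine ⟨b, ?_⟩
  rwa [Set.mem_ofPred_eq, filter_true_of_mem fun i hi => hb (mem_image_of_mem g hi)]

lemma kthSmallest_le (hk : 0 < k) {z : ℤ} (hz : k ≤ #{i ∈ s | g i ≤ z}) :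
    kthSmallest s k g ≤ z :=
  csInf_le (bddBelow_kthSmallest_set hk) hz

lemma le_card_filter_le_kthSmallest (hk : 0 < k) (hks : k ≤ #s) :
    k ≤ #{i ∈ s | g i ≤ kthSmallest s k g} :=
  Int.csInf_mem (nonempty_kthSmallest_set hks) (bddBelow_kthSmallest_set hk)

lemma kthSmallest_le_add (hk : 0 < k) (hks : k ≤ #s) {c : ℤ} (h : ∀ i ∈ s, g' i ≤ g i + c) :
    kthSmallest s k g' ≤ kthSmallest s k g + c := by
  refine kthSmallest_le hk ((le_card_filter_le_kthSmallest (g := g) hk hks).trans (card_le_card ?_))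
  intro i hi
  rw [mem_filter] at hi ⊢
  exact ⟨hi.1, by linarith [h i hi.1]⟩

lemma abs_kthSmallest_sub_le (hk : 0 < k) (hks : k ≤ #s) {c : ℤ}
    (h : ∀ i ∈ s, |g i - g' i| ≤ c) : |kthSmallest s k g - kthSmallest s k g'| ≤ c := by
  have h₁ := kthSmallest_le_add hk hks (g := g') (g' := g) (c := c) fun i hi => by
    linarith [(abs_le.1 (h i hi)).2]
  have h₂ := kthSmallest_le_add hk hks (g := g) (g' := g') (c := c) fun i hi => by
    linarith [(abs_le.1 (h i hi)).1]
  exact abs_le.2 ⟨by linarith, by linarith⟩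

lemma kthSmallest_eq_of_forall_mem_eq [DecidableEq ι] {T : Finset ι} {v : ℤ} (hTs : T ⊆ s)
    (hkT : k ≤ #T) (hsT : #s < #T + k) (hT : ∀ i ∈ T, g i = v) : kthSmallest s k g = v := by
  have hk : 0 < k := by have := card_le_card hTs; omega
  have hle : kthSmallest s k g ≤ v :=
    kthSmallest_le hk (hkT.trans (card_le_card fun i hi => mem_filter.2 ⟨hTs hi, (hT i hi).le⟩))
  refine hle.antisymm (not_lt.1 fun hlt => ?_)
  have hsub : {i ∈ s | g i ≤ kthSmallest s k g} ⊆ s \ T := fun i hi => by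
    rw [mem_filter] at hi
    exact mem_sdiff.2 ⟨hi.1, fun hiT => by linarith [hT i hiT, hi.2]⟩
  have := (le_card_filter_le_kthSmallest hk (hkT.trans (card_le_card hTs))).trans
    (card_le_card hsub)
  rw [card_sdiff_of_subset hTs] at this
  omega

end KthSmallest

lemma eq_or_adj_intGridGraph_iff {d : ℕ} {a b : Fin d → ℤ} :
    b = a ∨ (intGridGraph d).Adj a b ↔ ∀ c, |a c - b c| ≤ 1 := by
  refine ⟨?_, fun h => ?_⟩
  · rintro (rfl | hab)
    · simp
    · exact hab.2
  · by_cases hba : b = a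
    · exact Or.inl hba
    · exact Or.inr ⟨Ne.symm hba, h⟩

lemma rsMove_intGridGraph_iff {d : ℕ} {ι : Type*} {p q : ι → Fin d → ℤ} :
    RSMove (intGridGraph d) p q ↔ ∀ i c, |p i c - q i c| ≤ 1 :=
  forall_congr' fun _ => eq_or_adj_intGridGraph_iff

noncomputable def coordKthSmallest {ι : Type*} {d : ℕ} (s : Finset ι) (k : ℕ)
    (p : ι → Fin d → ℤ) : Fin d → ℤ :=
  fun c => kthSmallest s k fun i => p i c

lemma SpiesWin.of_positional {V : Type*} {G : SimpleGraph V} {r s k : ℕ}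
    (σ : (Fin r → V) → Fin s → V) (hmove : ∀ p q, RSMove G p q → RSMove G (σ p) (σ q))
    (hguard : ∀ p v, k ≤ {i | p i = v}.ncard → ∃ j, σ p j = v) : SpiesWin G r s k :=
  ⟨fun R n => σ (R n), fun _ _ n h => congrArg σ (h n le_rfl),
    fun R hR => ⟨fun n => hmove _ _ (hR n), fun n v => hguard (R n) v⟩⟩

noncomputable def shadowKthSmallestStrategy (d m k : ℕ) (p : Fin (m + (2 * k - 1)) → Fin d → ℤ) :
    Fin (m + 1) → Fin d → ℤ :=
  Fin.lastCases (coordKthSmallest (univ.map (Fin.natAddEmb m)) k p) fun j => p (Fin.castAdd _ j)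

lemma spiesWin_intGridGraph (d m k : ℕ) (hk : 0 < k) :
    SpiesWin (intGridGraph d) (m + (2 * k - 1)) (m + 1) k := by
  have hs : #(univ.map (Fin.natAddEmb m) : Finset (Fin (m + (2 * k - 1)))) = 2 * k - 1 := by
    simp
  refine SpiesWin.of_positional (shadowKthSmallestStrategy d m k) (fun p q hpq => ?_) ?_
  · rw [rsMove_intGridGraph_iff] at hpq ⊢
    intro j
    induction j using Fin.lastCases with
    | last =>
      simp only [shadowKthSmallestStrategy, Fin.lastCases_last, coordKthSmallest]
      exact fun c => abs_kthSmallest_sub_le hk (by omega) fun i _ => hpq i c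
    | cast j =>
      simp only [shadowKthSmallestStrategy, Fin.lastCases_castSucc]
      exact hpq _
  · intro p v hv
    by_cases hshadow : ∃ j : Fin m, p (Fin.castAdd _ j) = v
    · obtain ⟨j, hj⟩ := hshadow
      exact ⟨j.castSucc, by simpa [shadowKthSmallestStrategy] using hj⟩
    · push Not at hshadow
      set T : Finset (Fin (m + (2 * k - 1))) := {i | p i = v}
      have hTs : T ⊆ univ.map (Fin.natAddEmb m) := fun i hi => by
        induction i using Fin.addCases with
        | left j => exact absurd (mem_filter.1 hi).2 (hshadow j)
        | right j => exact mem_map_of_mem _ (mem_univ j)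
      have hkT : k ≤ #T := by rwa [← Set.ncard_coe_finset, coe_filter_univ]
      refine ⟨Fin.last m, funext fun c => ?_⟩
      simp only [shadowKthSmallestStrategy, Fin.lastCases_last, coordKthSmallest]
      exact kthSmallest_eq_of_forall_mem_eq hTs hkT (by omega)
        fun i hi => congrFun (mem_filter.1 hi).2 c

theorem stmt_15_general (d r k : ℕ) (hk : 1 ≤ k) (hkr : 2 * k ≤ r) :
    spySigma (intGridGraph d) r k ≤ r - 2 * k + 2 := by
  obtain ⟨m, rfl⟩ : ∃ m, r = m + (2 * k - 1) := ⟨r - (2 * k - 1), by omega⟩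
  have hspies : m + (2 * k - 1) - 2 * k + 2 = m + 1 := by omega
  rw [hspies]
  exact Nat.sInf_le (spiesWin_intGridGraph d m k hk)

theorem stmt_15 (d r k : ℕ) (hd : 0 < d) (hk : 1 ≤ k) (hkr : 2 * k ≤ r) :
    spySigma (intGridGraph d) r k ≤ r - 2 * k + 2 :=
  stmt_15_general d r k hk hkr
end
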